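/- Let h₀ > 0 and κ₀ > 0 be real constants. Define r : ℝ → ℝ by r(t) = exp(−1/t) for t > 0 and r(t) = 0 for t ≤ 0, and define ρ : ℝ → ℝ by ρ(t) = exp((1/h₀) · ∫₀ᵗ r(τ) dτ). Then there exists t₀ > 0 such that for every t with 0 < t < t₀ and all real numbers R, K, H satisfying R ≥ 0, |K| ≤ κ₀, and H ≥ h₀, one has (1/ρ(t)²) · ( R + 2K·(ρ(t)² − 1) + (2ρ'(t)/ρ(t))·H ) ≥ (r(t)/ρ(t)²) · ( 2 − (8κ₀/h₀)·t ), and this lower bound is strictly positive. -/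

import Mathlib

/-! Since `ρ'/ρ = r/h₀`, the mean-curvature term contributes at least `2 r(t)`. As `r` is
monotone, `∫₀ᵗ r ≤ t r(t)`, and `eˣ − 1 ≤ 2x` for `0 ≤ x ≤ 1/2` gives
`ρ(t)² − 1 ≤ (4/h₀) t r(t)`, so the Gauss-curvature term costs at most `(8κ₀/h₀) t r(t)`,
which is less than `2 r(t)` once `t < h₀/(4κ₀)`. -/

open Real Set

theorem expNegInvGlue_le_one (x : ℝ) : expNegInvGlue x ≤ 1 := by
  unfold expNegInvGlue
  split_ifs with hx
  · exact zero_le_one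
  · exact exp_le_one_iff.mpr (neg_nonpos.mpr (inv_nonneg.mpr (not_le.mp hx).le))

theorem intervalIntegral.integral_le_sub_mul_of_monotoneOn {f : ℝ → ℝ} {a b : ℝ} (hab : a ≤ b)
    (hf : MonotoneOn f (Icc a b)) : ∫ x in a..b, f x ≤ (b - a) * f b := by
  have hint : IntervalIntegrable f MeasureTheory.volume a b :=
    MonotoneOn.intervalIntegrable (by rwa [uIcc_of_le hab])
  calc ∫ x in a..b, f x ≤ ∫ _ in a..b, f b :=
        intervalIntegral.integral_mono_on hab hint intervalIntegrable_const
          fun x hx => hf hx ⟨hab, le_rfl⟩ hx.2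
    _ = (b - a) * f b := by rw [intervalIntegral.integral_const, smul_eq_mul]

theorem Real.exp_sub_one_le_two_mul {x : ℝ} (hx₀ : 0 ≤ x) (hx : x ≤ 1 / 2) :
    exp x - 1 ≤ 2 * x := by
  have hbound : exp x ≤ 1 / (1 - x) := exp_bound_div_one_sub_of_interval hx₀ (by linarith)
  have hden : 0 < 1 - x := by linarith
  rw [le_div_iff₀ hden] at hbound
  nlinarith

/-- The `ρ` of `g̃ = ρ(t)² dt² + γ_t`, with `r = expNegInvGlue`. -/
noncomputable def conformalFactor (h₀ t : ℝ) : ℝ :=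
  exp ((1 / h₀) * ∫ τ in (0 : ℝ)..t, expNegInvGlue τ)

namespace conformalFactor

variable {h₀ t : ℝ}

theorem pos : 0 < conformalFactor h₀ t := exp_pos _

theorem hasDerivAt (h₀ t : ℝ) :
    HasDerivAt (conformalFactor h₀) (conformalFactor h₀ t * (expNegInvGlue t / h₀)) t := by
  have hI := (expNegInvGlue.contDiff (n := 0).continuous.integral_hasStrictDerivAt 0 t).hasDerivAt
  refine (hI.const_mul (1 / h₀)).exp.congr_deriv ?_
  rw [conformalFactor]
  ring

theorem two_mul_deriv_div (h₀ t : ℝ) :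
    2 * deriv (conformalFactor h₀) t / conformalFactor h₀ t = 2 * (expNegInvGlue t / h₀) := by
  rw [(hasDerivAt h₀ t).deriv, mul_div_assoc, mul_div_cancel_left₀ _ pos.ne']

theorem sq_eq (h₀ t : ℝ) :
    conformalFactor h₀ t ^ 2 = exp ((2 / h₀) * ∫ τ in (0 : ℝ)..t, expNegInvGlue τ) := by
  rw [conformalFactor, ← exp_nat_mul]
  ring_nf

theorem one_le_sq (hh₀ : 0 < h₀) (ht : 0 ≤ t) : 1 ≤ conformalFactor h₀ t ^ 2 := by
  rw [sq_eq]
  exact one_le_exp (mul_nonneg (by positivity)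
    (intervalIntegral.integral_nonneg ht fun τ _ => expNegInvGlue.nonneg τ))

theorem sq_sub_one_le (hh₀ : 0 < h₀) (ht : 0 ≤ t) (ht₀ : t ≤ h₀ / 4) :
    conformalFactor h₀ t ^ 2 - 1 ≤ (4 / h₀) * t * expNegInvGlue t := by
  set I := ∫ τ in (0 : ℝ)..t, expNegInvGlue τ
  have hI₀ : 0 ≤ I := intervalIntegral.integral_nonneg ht fun τ _ => expNegInvGlue.nonneg τ
  have hI : I ≤ t * expNegInvGlue t := by
    simpa using intervalIntegral.integral_le_sub_mul_of_monotoneOn ht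
      (expNegInvGlue.monotone.monotoneOn _)
  have hIt : I ≤ t := hI.trans (mul_le_of_le_one_right ht (expNegInvGlue_le_one t))
  have hsmall : (2 / h₀) * I ≤ 1 / 2 := by
    rw [div_mul_eq_mul_div, div_le_iff₀ hh₀]
    linarith
  calc conformalFactor h₀ t ^ 2 - 1 ≤ 2 * ((2 / h₀) * I) := by
        rw [sq_eq]; exact exp_sub_one_le_two_mul (by positivity) hsmall
    _ = (4 / h₀) * I := by ring
    _ ≤ (4 / h₀) * (t * expNegInvGlue t) := by gcongr
    _ = (4 / h₀) * t * expNegInvGlue t := by ring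

end conformalFactor

/-- The bracket of `R̃ = ρ⁻² (R + 2K(ρ² − 1) + (2ρ'/ρ) H)`, with `q = ρ²` and `ρ'/ρ = r/h₀`. -/
theorem scalarCurvature_bracket_lower_bound {h₀ κ₀ R K H q r t : ℝ} (hh₀ : 0 < h₀)
    (hR : 0 ≤ R) (hK : |K| ≤ κ₀) (hH : h₀ ≤ H) (hr : 0 ≤ r) (hq : 1 ≤ q)
    (hqr : q - 1 ≤ (4 / h₀) * t * r) :
    r * (2 - (8 * κ₀ / h₀) * t) ≤ R + 2 * K * (q - 1) + 2 * (r / h₀) * H := by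
  have hκ₀ : 0 ≤ κ₀ := (abs_nonneg K).trans hK
  have hK' : -κ₀ ≤ K := (abs_le.mp hK).1
  have hKterm : -(8 * κ₀ / h₀) * t * r ≤ 2 * K * (q - 1) :=
    calc -(8 * κ₀ / h₀) * t * r = -(2 * κ₀) * ((4 / h₀) * t * r) := by ring
      _ ≤ -(2 * κ₀) * (q - 1) := by nlinarith
      _ ≤ 2 * K * (q - 1) := by nlinarith
  have hHterm : 2 * r ≤ 2 * (r / h₀) * H :=
    calc 2 * r = 2 * (r / h₀) * h₀ := by field_simp
      _ ≤ 2 * (r / h₀) * H := by gcongr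
  linarith

theorem stmt_4 (h₀ κ₀ : ℝ) (hh₀ : 0 < h₀) (hκ₀ : 0 < κ₀)
    (r : ℝ → ℝ) (hr : ∀ t : ℝ, r t = if 0 < t then Real.exp (-(1 / t)) else 0)
    (ρ : ℝ → ℝ)
    (hρ : ∀ t : ℝ, ρ t = Real.exp ((1 / h₀) * ∫ τ in (0:ℝ)..t, r τ)) :
    ∃ t₀ : ℝ, 0 < t₀ ∧ ∀ t : ℝ, 0 < t → t < t₀ →
      ∀ R K H : ℝ, 0 ≤ R → |K| ≤ κ₀ → h₀ ≤ H →
        (r t / (ρ t) ^ 2) * (2 - (8 * κ₀ / h₀) * t) ≤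
          (1 / (ρ t) ^ 2) *
            (R + 2 * K * ((ρ t) ^ 2 - 1) + (2 * deriv ρ t / ρ t) * H) ∧
        0 < (r t / (ρ t) ^ 2) * (2 - (8 * κ₀ / h₀) * t) := by
  obtain rfl : r = expNegInvGlue := funext fun t => by
    rw [hr, expNegInvGlue, one_div]
    split_ifs <;> first | rfl | linarith
  obtain rfl : ρ = conformalFactor h₀ := funext hρ
  refine ⟨min (h₀ / 4) (h₀ / (4 * κ₀)), by positivity, ?_⟩
  intro t ht htt₀ R K H hR hK hH
  have hρ₂ : 0 < conformalFactor h₀ t ^ 2 := pow_pos conformalFactor.pos 2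
  have hfactor : 0 < 2 - (8 * κ₀ / h₀) * t := by
    have : t < h₀ / (4 * κ₀) := htt₀.trans_le (min_le_right _ _)
    rw [lt_div_iff₀ (by positivity)] at this
    rw [sub_pos, div_mul_eq_mul_div, div_lt_iff₀ hh₀]
    linarith
  have hbracket := scalarCurvature_bracket_lower_bound hh₀ hR hK hH (expNegInvGlue.nonneg t)
    (conformalFactor.one_le_sq hh₀ ht.le)
    (conformalFactor.sq_sub_one_le hh₀ ht.le (htt₀.le.trans (min_le_left _ _)))
  rw [conformalFactor.two_mul_deriv_div]
  refine ⟨?_, by have := expNegInvGlue.pos_of_pos ht; positivity⟩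
  calc _ = (1 / conformalFactor h₀ t ^ 2) * (expNegInvGlue t * (2 - (8 * κ₀ / h₀) * t)) := by
        ring
    _ ≤ _ := by gcongr
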